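/- arXiv:2510.22104 — 2 statements merged into one kernel-verified Lean document; each statement's English description precedes it below -/
import Mathlib

section
/- Let n, p be natural numbers, let x₀ ∈ ℝⁿ, T > 0, and let f : ℝⁿ × ℝᵖ → ℝⁿ, (x, θ) ↦ f(x, θ), be continuously differentiable. Suppose x : ℝ × ℝᵖ → ℝⁿ, (t, θ) ↦ x(t, θ), is twice continuously differentiable with ∂x/∂t (t, θ) = f(x(t, θ), θ) and x(0, θ) = x₀ for all t and θ. Fix θ₀ ∈ ℝᵖ, let L : ℝⁿ → ℝ be differentiable, and let a : ℝ → ℝⁿ be differentiable with a′(t) = − (D_x f (x(t, θ₀), θ₀))* (a(t)) for all t ∈ [0, T] and terminal condition a(T) = ∇L(x(T, θ₀)). Then for every direction δθ ∈ ℝᵖ, the derivative at θ₀ of the map θ ↦ L(x(T, θ)) in the direction δθ equals ∫₀ᵀ ⟨a(t), D_θ f (x(t, θ₀), θ₀)(δθ)⟩ dt. -/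
open scoped RealInnerProductSpace

/-!
Write `v(t) = ∂θ x(t, θ₀) δθ` for the sensitivity of the trajectory. Differentiating the ODE in `θ`
and exchanging the mixed partials of the `C²` map `x` shows that `v` solves the variational equation
`v′ = D_x f v + D_θ f δθ` with `v(0) = 0`. Against the adjoint equation the `D_x f` terms cancel, so
`d/dt ⟪a, v⟫ = ⟪a, D_θ f δθ⟫`; integrating over `[0, T]` and using `a(T) = ∇L(x(T, θ₀))` turns
`⟪a(T), v(T)⟫` into the chain-rule derivative `DL(x(T, θ₀)) v(T)` of `θ ↦ L(x(T, θ))`.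
-/

open ContinuousLinearMap Set

section Partial

variable {𝕜 E F G : Type*} [NontriviallyNormedField 𝕜]
  [NormedAddCommGroup E] [NormedSpace 𝕜 E] [NormedAddCommGroup F] [NormedSpace 𝕜 F]
  [NormedAddCommGroup G] [NormedSpace 𝕜 G]

theorem fderiv_comp_prodMk_left {f : E × F → G} {e : E} {θ : F}
    (hf : DifferentiableAt 𝕜 f (e, θ)) :
    fderiv 𝕜 (fun e' => f (e', θ)) e = (fderiv 𝕜 f (e, θ)).comp (inl 𝕜 E F) :=
  (hf.hasFDerivAt.comp e (hasFDerivAt_prodMk_left e θ)).fderiv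

theorem fderiv_comp_prodMk_right {f : E × F → G} {e : E} {θ : F}
    (hf : DifferentiableAt 𝕜 f (e, θ)) :
    fderiv 𝕜 (fun θ' => f (e, θ')) θ = (fderiv 𝕜 f (e, θ)).comp (inr 𝕜 E F) :=
  (hf.hasFDerivAt.comp θ (hasFDerivAt_prodMk_right e θ)).fderiv

theorem fderiv_comp_prodMk_self_apply {f : E × F → G} {u : F → E} {θ : F}
    (hf : DifferentiableAt 𝕜 f (u θ, θ)) (hu : DifferentiableAt 𝕜 u θ) (δ : F) :
    fderiv 𝕜 (fun θ' => f (u θ', θ')) θ δ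
      = fderiv 𝕜 (fun e => f (e, θ)) (u θ) (fderiv 𝕜 u θ δ)
        + fderiv 𝕜 (fun θ' => f (u θ, θ')) θ δ := by
  have h : HasFDerivAt (fun θ' => f (u θ', θ'))
      ((fderiv 𝕜 f (u θ, θ)).comp ((fderiv 𝕜 u θ).prod (.id 𝕜 F))) θ :=
    HasFDerivAt.comp (g := f) θ hf.hasFDerivAt (hu.hasFDerivAt.prodMk (hasFDerivAt_id θ))
  rw [h.fderiv, fderiv_comp_prodMk_left hf, fderiv_comp_prodMk_right hf]
  exact (comp_inl_add_comp_inr _ (fderiv 𝕜 u θ δ, δ)).symm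

theorem ContDiff.continuous_fderiv_comp_prodMk_right_apply {X : Type*} [TopologicalSpace X]
    {f : E × F → G} (hf : ContDiff 𝕜 1 f) {u : X → E} (hu : Continuous u) (θ δ : F) :
    Continuous fun s => fderiv 𝕜 (fun θ' => f (u s, θ')) θ δ := by
  simp_rw [fderiv_comp_prodMk_right (hf.differentiable one_ne_zero _), comp_apply]
  exact ((hf.continuous_fderiv one_ne_zero).comp (hu.prodMk continuous_const)).clm_apply
    continuous_const

end Partial

section Sensitivity

variable {E F : Type*} [NormedAddCommGroup E] [NormedSpace ℝ E]
  [NormedAddCommGroup F] [NormedSpace ℝ F]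

/-- Symmetry of the second derivative of `x`, read as `∂ₜ ∂_θ x = ∂_θ ∂ₜ x`. -/
theorem hasDerivAt_fderiv_comp_prodMk_right {x g : ℝ × F → E} (hx : ContDiff ℝ 2 x)
    (hg : ∀ t θ, HasDerivAt (fun τ => x (τ, θ)) (g (t, θ)) t) (t : ℝ) (θ δ : F) :
    HasDerivAt (fun s => fderiv ℝ (fun θ' => x (s, θ')) θ δ)
      (fderiv ℝ (fun θ' => g (t, θ')) θ δ) t := by
  have hxd : Differentiable ℝ x := hx.differentiable two_ne_zero
  have hDd : Differentiable ℝ (fderiv ℝ x) :=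
    (hx.fderiv_right one_add_one_eq_two.le).differentiable one_ne_zero
  have htime : ∀ s θ', HasDerivAt (fun τ : ℝ => (τ, θ')) ((1 : ℝ), (0 : F)) s :=
    fun s θ' => (hasDerivAt_id s).prodMk (hasDerivAt_const s θ')
  have hg_eq : (fun θ' => g (t, θ')) = fun θ' => fderiv ℝ x (t, θ') (1, 0) :=
    funext fun θ' => (hg t θ').unique ((hxd _).hasFDerivAt.comp_hasDerivAt t (htime t θ'))
  set D2 := fderiv ℝ (fderiv ℝ x) (t, θ)
  have hsymm : D2 (1, 0) (0, δ) = D2 (0, δ) (1, 0) :=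
    second_derivative_symmetric (fun y => (hxd y).hasFDerivAt) (hDd (t, θ)).hasFDerivAt _ _
  have hθ : fderiv ℝ (fun θ' => fderiv ℝ x (t, θ') (1, 0)) θ δ = D2 (0, δ) (1, 0) := by
    have h : HasFDerivAt (fun θ' => fderiv ℝ x (t, θ') (1, 0))
        (D2.comp (inr ℝ ℝ F) |>.flip ((1 : ℝ), (0 : F))) θ := by
      simpa using ((hDd _).hasFDerivAt.comp θ (hasFDerivAt_prodMk_right t θ)).clm_apply
        (hasFDerivAt_const ((1 : ℝ), (0 : F)) θ)
    rw [h.fderiv]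
    rfl
  simp_rw [fderiv_comp_prodMk_right (hxd _), comp_apply, hg_eq, hθ, ← hsymm]
  simpa using ((hDd _).hasFDerivAt.comp_hasDerivAt t (htime t θ)).clm_apply
    (hasDerivAt_const t ((0 : ℝ), δ))

theorem hasDerivAt_fderiv_comp_prodMk_right_of_ode {x : ℝ × F → E} {f : E × F → E}
    (hx : ContDiff ℝ 2 x) (hode : ∀ t θ, HasDerivAt (fun τ => x (τ, θ)) (f (x (t, θ), θ)) t)
    (t : ℝ) (θ δ : F) (hf : DifferentiableAt ℝ f (x (t, θ), θ)) :
    HasDerivAt (fun s => fderiv ℝ (fun θ' => x (s, θ')) θ δ)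
      (fderiv ℝ (fun e => f (e, θ)) (x (t, θ)) (fderiv ℝ (fun θ' => x (t, θ')) θ δ)
        + fderiv ℝ (fun θ' => f (x (t, θ), θ')) θ δ) t := by
  have hxθ : DifferentiableAt ℝ (fun θ' => x (t, θ')) θ :=
    ((hx.differentiable two_ne_zero).comp (differentiable_const t |>.prodMk differentiable_id)) θ
  rw [← fderiv_comp_prodMk_self_apply (u := fun θ' => x (t, θ')) hf hxθ]
  exact hasDerivAt_fderiv_comp_prodMk_right (g := fun q => f (x q, q.2)) hx hode t θ δ

end Sensitivity

section Adjoint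

variable {E : Type*} [NormedAddCommGroup E] [InnerProductSpace ℝ E] [CompleteSpace E]

theorem HasDerivAt.inner_of_adjoint {a v : ℝ → E} {A : E →L[ℝ] E} {w : E} {t : ℝ}
    (ha : HasDerivAt a (-(adjoint A) (a t)) t) (hv : HasDerivAt v (A (v t) + w) t) :
    HasDerivAt (fun s => ⟪a s, v s⟫) ⟪a t, w⟫ t := by
  refine (ha.inner ℝ hv).congr_deriv ?_
  rw [inner_add_right, inner_neg_left, adjoint_inner_left]
  ring

theorem integral_inner_eq_sub_of_adjoint {a v w : ℝ → E} {A : ℝ → E →L[ℝ] E} {t₀ t₁ : ℝ}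
    (ha : ∀ t ∈ uIcc t₀ t₁, HasDerivAt a (-(adjoint (A t)) (a t)) t)
    (hv : ∀ t ∈ uIcc t₀ t₁, HasDerivAt v (A t (v t) + w t) t)
    (hint : IntervalIntegrable (fun t => ⟪a t, w t⟫) MeasureTheory.volume t₀ t₁) :
    ∫ t in t₀..t₁, ⟪a t, w t⟫ = ⟪a t₁, v t₁⟫ - ⟪a t₀, v t₀⟫ :=
  intervalIntegral.integral_eq_sub_of_hasDerivAt
    (fun t ht => (ha t ht).inner_of_adjoint (hv t ht)) hint

end Adjoint

/-- **Adjoint-based gradient formula for parameters.**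
For the parametrized ODE `∂x/∂t (t,θ) = f(x(t,θ), θ)` with `x(0,θ) = x₀`,
terminal loss `L`, and adjoint state `a` solving `a′(t) = −(D_x f)* a(t)` on
`[0,T]` with `a(T) = ∇L(x(T,θ₀))`, the directional derivative at `θ₀` of
`θ ↦ L(x(T,θ))` in direction `δθ` equals `∫₀ᵀ ⟨a(t), D_θ f(x(t,θ₀),θ₀) δθ⟩ dt`. -/
theorem trase_adjoint_gradient_parameters
    (n p : ℕ) (x₀ : EuclideanSpace ℝ (Fin n)) (T : ℝ) (hT : 0 < T)
    (f : EuclideanSpace ℝ (Fin n) × EuclideanSpace ℝ (Fin p) → EuclideanSpace ℝ (Fin n))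
    (hf : ContDiff ℝ 1 f)
    (x : ℝ × EuclideanSpace ℝ (Fin p) → EuclideanSpace ℝ (Fin n))
    (hx : ContDiff ℝ 2 x)
    (hode : ∀ (t : ℝ) (θ : EuclideanSpace ℝ (Fin p)),
      deriv (fun τ => x (τ, θ)) t = f (x (t, θ), θ))
    (hinit : ∀ θ : EuclideanSpace ℝ (Fin p), x (0, θ) = x₀)
    (θ₀ : EuclideanSpace ℝ (Fin p))
    (L : EuclideanSpace ℝ (Fin n) → ℝ) (hL : Differentiable ℝ L)
    (a : ℝ → EuclideanSpace ℝ (Fin n)) (ha : Differentiable ℝ a)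
    (ha' : ∀ t ∈ Set.Icc (0 : ℝ) T,
      deriv a t
        = - (ContinuousLinearMap.adjoint
              (fderiv ℝ (fun y => f (y, θ₀)) (x (t, θ₀)))) (a t))
    (haT : a T = gradient L (x (T, θ₀))) :
    ∀ δθ : EuclideanSpace ℝ (Fin p),
      fderiv ℝ (fun θ => L (x (T, θ))) θ₀ δθ
        = ∫ t in (0 : ℝ)..T, ⟪a t, fderiv ℝ (fun θ => f (x (t, θ₀), θ)) θ₀ δθ⟫ := by
  intro δθ
  have hxd : Differentiable ℝ x := hx.differentiable two_ne_zero
  have hxT : DifferentiableAt ℝ (fun θ => x (T, θ)) θ₀ :=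
    (hxd.comp (differentiable_const T |>.prodMk differentiable_id)) θ₀
  have hode' : ∀ t θ, HasDerivAt (fun τ => x (τ, θ)) (f (x (t, θ), θ)) t := fun t θ =>
    hode t θ ▸ (hxd.comp (differentiable_id.prodMk (differentiable_const θ)) t).hasDerivAt
  have hadj : ∀ t ∈ uIcc 0 T, HasDerivAt a
      (-(adjoint (fderiv ℝ (fun y => f (y, θ₀)) (x (t, θ₀)))) (a t)) t := fun t ht =>
    ha' t (uIcc_of_le hT.le ▸ ht) ▸ (ha t).hasDerivAt
  have hint : IntervalIntegrable
      (fun t => ⟪a t, fderiv ℝ (fun θ => f (x (t, θ₀), θ)) θ₀ δθ⟫) MeasureTheory.volume 0 T :=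
    (ha.continuous.inner (hf.continuous_fderiv_comp_prodMk_right_apply
      (hxd.continuous.comp (continuous_id.prodMk continuous_const)) θ₀ δθ)).intervalIntegrable _ _
  rw [integral_inner_eq_sub_of_adjoint hadj
      (fun t _ => hasDerivAt_fderiv_comp_prodMk_right_of_ode hx hode' t θ₀ δθ
        (hf.differentiable one_ne_zero _)) hint,
    haT, inner_gradient_left, fderiv_fun_comp θ₀ (hL _) hxT]
  simp [hinit]
end

section
/- Let n be a natural number, T > 0, and let f : ℝⁿ → ℝⁿ be continuously differentiable. Suppose x : ℝ × ℝⁿ → ℝⁿ, (t, ξ) ↦ x(t, ξ), is twice continuously differentiable with ∂x/∂t (t, ξ) = f(x(t, ξ)) and x(0, ξ) = ξ for all t and ξ. Fix ξ₀ ∈ ℝⁿ, let L : ℝⁿ → ℝ be differentiable, and let a : ℝ → ℝⁿ be differentiable with a′(t) = − (D_x f (x(t, ξ₀)))* (a(t)) for all t ∈ [0, T] and a(T) = ∇L(x(T, ξ₀)). Then for every direction δξ ∈ ℝⁿ, the derivative at ξ₀ of the map ξ ↦ L(x(T, ξ)) in the direction δξ equals ⟨a(0), δξ⟩; that is, the gradient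 at ξ₀ of ξ ↦ L(x(T, ξ)) equals a(0). -/
/-!
Let `v(t) = ∂x/∂ξ (t, ξ₀) δξ` be the variation of the flow in the direction `δξ`. Since mixed
partials of `x` commute, differentiating `∂x/∂t = f ∘ x` in `ξ` gives the variational equation
`v′ = D_x f · v`, with `v(0) = δξ` because `x(0, ·) = id`. Against the adjoint equation the pairing
`⟨a(t), v(t)⟩` has derivative `−⟨(D_x f)* a, v⟩ + ⟨a, D_x f · v⟩ = 0`, so
`D(L ∘ x(T, ·)) δξ = ⟨∇L(x(T)), v(T)⟩ = ⟨a(T), v(T)⟩ = ⟨a(0), v(0)⟩ = ⟨a(0), δξ⟩`.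
-/

open scoped RealInnerProductSpace

open ContinuousLinearMap Set

theorem inner_eq_of_hasDerivAt_neg_adjoint {E : Type*} [NormedAddCommGroup E]
    [InnerProductSpace ℝ E] [CompleteSpace E] {a v : ℝ → E} {A : ℝ → E →L[ℝ] E} {t₀ t₁ : ℝ}
    (h : t₀ ≤ t₁) (ha : ∀ t ∈ Icc t₀ t₁, HasDerivAt a (-(adjoint (A t)) (a t)) t)
    (hv : ∀ t ∈ Icc t₀ t₁, HasDerivAt v (A t (v t)) t) :
    ⟪a t₁, v t₁⟫ = ⟪a t₀, v t₀⟫ := by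
  have hderiv : ∀ t ∈ Icc t₀ t₁, HasDerivAt (fun t => ⟪a t, v t⟫) 0 t := fun t ht => by
    simpa [inner_neg_left, adjoint_inner_left] using (ha t ht).inner ℝ (hv t ht)
  exact constant_of_has_deriv_right_zero
    (fun t ht => (hderiv t ht).continuousAt.continuousWithinAt)
    (fun t ht => (hderiv t (Ico_subset_Icc_self ht)).hasDerivWithinAt) t₁ (right_mem_Icc.2 h)

section Variation

variable {E F : Type*} [NormedAddCommGroup E] [NormedSpace ℝ E]
  [NormedAddCommGroup F] [NormedSpace ℝ F]

theorem HasFDerivAt.hasDerivAt_comp_prodMk_left {g : ℝ × E → F}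
    {g' : ℝ × E →L[ℝ] F} {t : ℝ} {ξ : E} (hg : HasFDerivAt g g' (t, ξ)) :
    HasDerivAt (fun τ => g (τ, ξ)) (g' (1, 0)) t :=
  hg.comp_hasDerivAt t ((hasDerivAt_id t).prodMk (hasDerivAt_const t ξ))

theorem HasFDerivAt.comp_prodMk_right {g : ℝ × E → F}
    {g' : ℝ × E →L[ℝ] F} {t : ℝ} {ξ : E} (hg : HasFDerivAt g g' (t, ξ)) :
    HasFDerivAt (fun ξ => g (t, ξ)) (g'.comp (inr ℝ ℝ E)) ξ :=
  hg.comp ξ (hasFDerivAt_prodMk_right t ξ)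

theorem fderiv_apply_one_zero_eq_of_deriv_eq {x : ℝ × E → F} {f : F → F}
    (hx : Differentiable ℝ x) (hode : ∀ t ξ, deriv (fun τ => x (τ, ξ)) t = f (x (t, ξ)))
    (p : ℝ × E) : fderiv ℝ x p (1, 0) = f (x p) := by
  rw [← hode, ((hx p).hasFDerivAt.hasDerivAt_comp_prodMk_left).deriv]

noncomputable def variation (x : ℝ × E → F) (ξ δξ : E) (t : ℝ) : F :=
  fderiv ℝ x (t, ξ) (0, δξ)

theorem variation_zero {x : ℝ × E → E} {ξ : E} (hx : DifferentiableAt ℝ x (0, ξ))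
    (hinit : ∀ ξ, x (0, ξ) = ξ) (δξ : E) : variation x ξ δξ 0 = δξ := by
  have hid : (fderiv ℝ x (0, ξ)).comp (inr ℝ ℝ E) = ContinuousLinearMap.id ℝ E :=
    hx.hasFDerivAt.comp_prodMk_right.unique
      ((hasFDerivAt_id ξ).congr_of_eventuallyEq (.of_forall hinit))
  simpa [variation] using congrArg (· δξ) hid

theorem hasDerivAt_variation {x : ℝ × E → F} {f : F → F} {ξ : E} {t : ℝ}
    (hx : ContDiff ℝ 2 x) (hf : DifferentiableAt ℝ f (x (t, ξ)))
    (htime : ∀ p, fderiv ℝ x p (1, 0) = f (x p)) (δξ : E) :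
    HasDerivAt (variation x ξ δξ) (fderiv ℝ f (x (t, ξ)) (variation x ξ δξ t)) t := by
  set D2 := fderiv ℝ (fderiv ℝ x) (t, ξ)
  have hD2 : HasFDerivAt (fderiv ℝ x) D2 (t, ξ) :=
    ((hx.fderiv_right (by norm_num)).differentiable one_ne_zero _).hasFDerivAt
  have happly (w : ℝ × E) : HasFDerivAt (fun p => fderiv ℝ x p w) (D2.flip w) (t, ξ) := by
    simpa using hD2.clm_apply (hasFDerivAt_const w _)
  have hfx : HasFDerivAt (fun p => f (x p)) (D2.flip (1, 0)) (t, ξ) := by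
    simpa only [htime] using happly (1, 0)
  have hsymm : D2 (1, 0) (0, δξ) = D2 (0, δξ) (1, 0) :=
    (hx.contDiffAt.isSymmSndFDerivAt (by simp)).eq _ _
  have hchain := hf.hasFDerivAt.comp (t, ξ) ((hx.differentiable two_ne_zero) _).hasFDerivAt
  have hfx_apply := congrArg (· (0, δξ)) (hfx.unique hchain)
  simp only [flip_apply, comp_apply] at hfx_apply
  have hv := (happly (0, δξ)).hasDerivAt_comp_prodMk_left
  rwa [flip_apply, hsymm, hfx_apply] at hv

end Variation

/-- **Adjoint-based gradient with respect to the initial condition.**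
For the ODE `∂x/∂t (t,ξ) = f(x(t,ξ))` with `x(0,ξ) = ξ`, terminal loss `L`, and
adjoint state `a` solving `a′(t) = −(D_x f)* a(t)` on `[0,T]` with
`a(T) = ∇L(x(T,ξ₀))`, the derivative at `ξ₀` of `ξ ↦ L(x(T,ξ))` in direction
`δξ` equals `⟨a(0), δξ⟩`; that is, the gradient equals `a(0)`. -/
theorem trase_adjoint_gradient_initial_condition
    (n : ℕ) (T : ℝ) (hT : 0 < T)
    (f : EuclideanSpace ℝ (Fin n) → EuclideanSpace ℝ (Fin n))
    (hf : ContDiff ℝ 1 f)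
    (x : ℝ × EuclideanSpace ℝ (Fin n) → EuclideanSpace ℝ (Fin n))
    (hx : ContDiff ℝ 2 x)
    (hode : ∀ (t : ℝ) (ξ : EuclideanSpace ℝ (Fin n)),
      deriv (fun τ => x (τ, ξ)) t = f (x (t, ξ)))
    (hinit : ∀ ξ : EuclideanSpace ℝ (Fin n), x (0, ξ) = ξ)
    (ξ₀ : EuclideanSpace ℝ (Fin n))
    (L : EuclideanSpace ℝ (Fin n) → ℝ) (hL : Differentiable ℝ L)
    (a : ℝ → EuclideanSpace ℝ (Fin n)) (ha : Differentiable ℝ a)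
    (ha' : ∀ t ∈ Set.Icc (0 : ℝ) T,
      deriv a t
        = - (ContinuousLinearMap.adjoint (fderiv ℝ f (x (t, ξ₀)))) (a t))
    (haT : a T = gradient L (x (T, ξ₀))) :
    (∀ δξ : EuclideanSpace ℝ (Fin n),
      fderiv ℝ (fun ξ => L (x (T, ξ))) ξ₀ δξ = ⟪a 0, δξ⟫)
    ∧ gradient (fun ξ => L (x (T, ξ))) ξ₀ = a 0 := by
  have hx1 : Differentiable ℝ x := hx.differentiable two_ne_zero
  have hconserved (δξ) : ⟪a T, variation x ξ₀ δξ T⟫ = ⟪a 0, δξ⟫ := by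
    rw [inner_eq_of_hasDerivAt_neg_adjoint hT.le (fun t ht => ha' t ht ▸ (ha t).hasDerivAt)
      fun t _ => hasDerivAt_variation hx (hf.differentiable one_ne_zero _)
        (fderiv_apply_one_zero_eq_of_deriv_eq hx1 hode) δξ, variation_zero (hx1 _) hinit]
  have hgrad : HasGradientAt (fun ξ => L (x (T, ξ))) (a 0) ξ₀ := by
    refine hasGradientAt_iff_hasFDerivAt.2
      (((hL _).hasFDerivAt.comp ξ₀ (hx1 _).hasFDerivAt.comp_prodMk_right).congr_fderiv ?_)
    ext1 δξ
    rw [InnerProductSpace.toDual_apply_apply, ← hconserved, haT, gradient,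
      InnerProductSpace.toDual_symm_apply]
    rfl
  refine ⟨fun δξ => ?_, hgrad.gradient⟩
  rw [(hasGradientAt_iff_hasFDerivAt.1 hgrad).fderiv, InnerProductSpace.toDual_apply_apply]
end
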